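/- Let M be a loopless matroid on a finite ground set E and B a building set for M. Then every inclusion-maximal nested set N ⊆ B has cardinality equal to the rank of M. -/

import Mathlib

open Set Matroid
open scoped Matroid

variable {α : Type*}

/-- Two sets are incomparable under inclusion. -/
def Incomp (X Y : Set α) : Prop := ¬ X ⊆ Y ∧ ¬ Y ⊆ X

/-- The inclusion-maximal elements of a family of sets. -/
def maxB (B : Set (Set α)) : Set (Set α) := {X ∈ B | ∀ Y ∈ B, X ⊆ Y → X = Y}

/-- The rank of a set in a matroid: the largest size of an independent subset. -/
noncomputable def mrank (M : Matroid α) (X : Set α) : ℕ :=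
  sSup {n : ℕ | ∃ I ⊆ X, M.Indep I ∧ I.ncard = n}

/-- A matroid is loopless if every singleton of the ground set is independent. -/
def MLoopless (M : Matroid α) : Prop := ∀ e ∈ M.E, M.Indep {e}

/-- A matroid is connected if its rank function is not additive over any
separation of the ground set into two nonempty parts. -/
def MConnected (M : Matroid α) : Prop :=
  ∀ A B : Set α, A ∪ B = M.E → Disjoint A B → A.Nonempty → B.Nonempty →
    mrank M A + mrank M B ≠ mrank M M.E

/-- A building set for a matroid `M`: a set of nonempty flats containing all nonempty
flats whose restriction is connected, and closed under joins of intersecting members. -/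
def IsBuildingSet (M : Matroid α) (B : Set (Set α)) : Prop :=
  (∀ X ∈ B, M.IsFlat X ∧ X.Nonempty) ∧
  (∀ X, M.IsFlat X → X.Nonempty → MConnected (M.restrict X) → X ∈ B) ∧
  (∀ X ∈ B, ∀ Y ∈ B, (X ∩ Y).Nonempty → M.closure (X ∪ Y) ∈ B)

/-- A nested set of a building set `B`. -/
def IsNested (M : Matroid α) (B N : Set (Set α)) : Prop :=
  N ⊆ B ∧ maxB B ⊆ N ∧
  ∀ S : Set (Set α), S ⊆ N → S.Nontrivial → S.Pairwise Incomp →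
    M.closure (⋃₀ S) ∉ B

/-- An inclusion-maximal nested set. -/
def IsMaxNested (M : Matroid α) (B N : Set (Set α)) : Prop :=
  IsNested M B N ∧ ∀ N', IsNested M B N' → N ⊆ N' → N' = N

/-- An atom of a matroid: a rank-one flat. -/
def IsAtomFlat (M : Matroid α) (A : Set α) : Prop := M.IsFlat A ∧ mrank M A = 1

/-- Atoms are compared by their least elements. -/
def atomLE [Preorder α] (A A' : Set α) : Prop :=
  ∃ a a', IsLeast A a ∧ IsLeast A' a' ∧ a ≤ a'

/-- Strict comparison of atoms by their least elements. -/
def atomLT [Preorder α] (A A' : Set α) : Prop :=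
  ∃ a a', IsLeast A a ∧ IsLeast A' a' ∧ a < a'

/-- `A` is an admissible label for `X` within the family `S`:
an atom contained in `X` but in no member of `S` properly below `X`. -/
def GoodLabel (M : Matroid α) (S : Set (Set α)) (X A : Set α) : Prop :=
  IsAtomFlat M A ∧ A ⊆ X ∧ ∀ Y ∈ S, Y ⊂ X → ¬ A ⊆ Y

/-- `A` is the label `m_S(X)`: the least admissible label for `X` within `S`. -/
def IsMinLabel [Preorder α] (M : Matroid α) (S : Set (Set α)) (X A : Set α) : Prop :=
  GoodLabel M S X A ∧ ∀ A', GoodLabel M S X A' → atomLE A A'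

/-- `NLListing M N R L` : `L` is the NL-listing of the remaining family `R`
(labels computed with respect to the whole family `N`), obtained by repeatedly
plucking the inclusion-minimal member with least label. -/
inductive NLListing [Preorder α] (M : Matroid α) (N : Set (Set α)) :
    Set (Set α) → List (Set α × Set α) → Prop
  | nil : NLListing M N ∅ []
  | cons {R : Set (Set α)} {X A : Set α} {L : List (Set α × Set α)} :
      X ∈ R →
      (∀ Y ∈ R, Y ⊆ X → Y = X) →
      IsMinLabel M N X A →
      (∀ Y ∈ R, (∀ W ∈ R, W ⊆ Y → W = Y) → ∀ A', IsMinLabel M N Y A' → atomLE A A') →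
      NLListing M N (R \ {X}) L →
      NLListing M N R ((X, A) :: L)

/-- A descent of a list of atoms at position `i`. -/
def HasDescentAt [Preorder α] (L : List (Set α)) (i : ℕ) : Prop :=
  ∃ h : i + 1 < L.length, atomLT (L.get ⟨i + 1, h⟩) (L.get ⟨i, Nat.lt_of_succ_lt h⟩)

/-- The indicator vector of a set. -/
noncomputable def indVec (X : Set α) : α → ℝ := X.indicator 1

/-- `v` is the vertex of the nested set `N` for the weight vector `c`. -/
def IsVertex (M : Matroid α) (B : Set (Set α)) (c : Set α → ℝ) (N : Set (Set α))
    (v : α → ℝ) : Prop :=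
  (∀ X ∈ N, ∑ᶠ a ∈ X, v a = c X) ∧
  ∃ lam mu : Set α → ℝ,
    (∀ X ∈ N \ maxB B, 0 < lam X) ∧
    v = (∑ᶠ X ∈ N \ maxB B, lam X • indVec X) + ∑ᶠ Y ∈ maxB B, mu Y • indVec Y

/-- `c` is cubical: every nested set has a unique vertex. -/
def IsCubical (M : Matroid α) (B : Set (Set α)) (c : Set α → ℝ) : Prop :=
  ∀ N, IsNested M B N → ∃! v, IsVertex M B c N v

/-- Lexicographic comparison of vectors in `ℝ^E`. -/
def lexLt [LinearOrder α] (u v : α → ℝ) : Prop :=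
  ∃ i, u i < v i ∧ ∀ j, j < i → u j = v j

open Classical in
/-- The map `τ_Z`. -/
noncomputable def tau (M : Matroid α) (Z X : Set α) : Set α :=
  if X ⊆ Z then X else M.closure (X ∪ Z) \ Z

/-- `MZ` is the contraction `M ／ Z`. -/
def IsContraction (M MZ : Matroid α) (Z : Set α) : Prop :=
  MZ.E = M.E \ Z ∧
  ∀ I : Set α, MZ.Indep I ↔ I ⊆ M.E \ Z ∧ ∃ J, M.IsBasis J Z ∧ M.Indep (I ∪ J)


set_option linter.unusedSectionVars false
set_option linter.unusedVariables false
section Helpers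
variable {α : Type*} [Fintype α] {M : Matroid α} {B : Set (Set α)}
  {I J X Y C F F₁ F₂ A R Z : Set α}

lemma mrank_bddAbove (M : Matroid α) (X : Set α) :
    BddAbove {n : ℕ | ∃ I ⊆ X, M.Indep I ∧ I.ncard = n} := by
  refine ⟨Fintype.card α, fun n hn => ?_⟩
  obtain ⟨I, -, -, rfl⟩ := hn
  simpa [Set.ncard_univ, Nat.card_eq_fintype_card] using
    Set.ncard_le_ncard (Set.subset_univ I) (Set.toFinite _)

lemma mrank_nonempty (M : Matroid α) (X : Set α) :
    {n : ℕ | ∃ I ⊆ X, M.Indep I ∧ I.ncard = n}.Nonempty :=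
  ⟨0, ∅, Set.empty_subset X, M.empty_indep, Set.ncard_empty α⟩

lemma le_mrank (hI : M.Indep I) (hIX : I ⊆ X) : I.ncard ≤ mrank M X :=
  le_csSup (mrank_bddAbove M X) ⟨I, hIX, hI, rfl⟩

lemma mrank_le {n : ℕ} (h : ∀ I, I ⊆ X → M.Indep I → I.ncard ≤ n) : mrank M X ≤ n :=
  csSup_le (mrank_nonempty M X) (fun m hm => by obtain ⟨I, h1, h2, rfl⟩ := hm; exact h I h1 h2)

lemma Matroid.IsBasis.mrank_eq (h : M.IsBasis I X) : mrank M X = I.ncard := by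
  refine le_antisymm (mrank_le fun J hJX hJ => ?_) (le_mrank h.indep h.subset)
  obtain ⟨J', hJ', hJJ'⟩ := hJ.subset_isBasis_of_subset hJX h.subset_ground
  have h1 : J'.ncard = I.ncard := by
    have := hJ'.encard_eq_encard h
    rw [Set.ncard_def, this, ← Set.ncard_def]
  exact h1 ▸ Set.ncard_le_ncard hJJ' (Set.toFinite _)

lemma mrank_mono (hXY : X ⊆ Y) : mrank M X ≤ mrank M Y :=
  mrank_le fun I hIX hI => le_mrank hI (hIX.trans hXY)

lemma mrank_closure_eq (hX : X ⊆ M.E) : mrank M (M.closure X) = mrank M X := by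
  obtain ⟨I, hI⟩ := M.exists_isBasis X hX
  rw [hI.isBasis_closure_right.mrank_eq, hI.mrank_eq]

lemma mrank_union_le : mrank M (X ∪ Y) ≤ mrank M X + mrank M Y := by
  refine mrank_le fun I hIXY hI => ?_
  have h1 : I.ncard ≤ (I ∩ X).ncard + (I \ X).ncard := by
    rw [Set.ncard_inter_add_ncard_diff_eq_ncard I X (Set.toFinite _)]
  refine h1.trans (Nat.add_le_add (le_mrank (hI.subset Set.inter_subset_left)
    Set.inter_subset_right) (le_mrank (hI.subset Set.diff_subset) fun x hx => ?_))
  rcases hIXY hx.1 with h | h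
  · exact absurd h hx.2
  · exact h

lemma mrank_flat_eq_of_subset (hF₁ : M.IsFlat F₁) (hF₂ : M.IsFlat F₂) (h12 : F₁ ⊆ F₂)
    (hr : mrank M F₂ ≤ mrank M F₁) : F₁ = F₂ := by
  obtain ⟨I, hI⟩ := M.exists_isBasis F₁ hF₁.subset_ground
  obtain ⟨J, hJ, hIJ⟩ := hI.indep.subset_isBasis_of_subset (hI.subset.trans h12) hF₂.subset_ground
  have hIJ' : I = J := by
    refine Set.eq_of_subset_of_ncard_le hIJ ?_ (Set.toFinite _)
    rw [← hI.mrank_eq, ← hJ.mrank_eq]; exact hr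
  refine subset_antisymm h12 ?_
  calc F₂ ⊆ M.closure J := hJ.subset_closure
  _ = M.closure I := by rw [hIJ']
  _ ⊆ M.closure F₁ := M.closure_subset_closure hI.subset
  _ = F₁ := hF₁.closure

lemma mrank_lt_of_flat_ssubset (hF₁ : M.IsFlat F₁) (hF₂ : M.IsFlat F₂) (h12 : F₁ ⊂ F₂) :
    mrank M F₁ < mrank M F₂ := by
  by_contra h
  exact h12.ne (mrank_flat_eq_of_subset hF₁ hF₂ h12.subset (not_lt.mp h))

lemma mrank_restrict (hA : A ⊆ R) : mrank (M ↾ R) A = mrank M A := by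
  unfold mrank
  congr 1
  ext n
  constructor
  · rintro ⟨I, hIA, hI, rfl⟩
    exact ⟨I, hIA, (Matroid.restrict_indep_iff.mp hI).1, rfl⟩
  · rintro ⟨I, hIA, hI, rfl⟩
    exact ⟨I, hIA, Matroid.restrict_indep_iff.mpr ⟨hI, hIA.trans hA⟩, rfl⟩




lemma one_le_mrank (hM : MLoopless M) (hA : X ⊆ M.E) (hn : X.Nonempty) : 1 ≤ mrank M X := by
  obtain ⟨a, ha⟩ := hn
  simpa using le_mrank (hM a (hA ha)) (Set.singleton_subset_iff.mpr ha)

lemma closure_empty_eq (hM : MLoopless M) : M.closure ∅ = ∅ := by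
  ext e
  simp only [Set.mem_empty_iff_false, iff_false]
  intro he
  have heE : e ∈ M.E := M.mem_ground_of_mem_closure he
  have hdep := M.empty_indep.insert_dep_iff.mpr (by simpa using he)
  exact hdep.not_indep (by simpa using hM e heE)

lemma exists_circuit_of_lt {A B : Set α} (hA : A ⊆ M.E) (hB : B ⊆ M.E) (hdisj : Disjoint A B)
    (hlt : mrank M (A ∪ B) < mrank M A + mrank M B) :
    ∃ C ⊆ A ∪ B, (C ∩ A).Nonempty ∧ (C ∩ B).Nonempty ∧ ¬ M.Indep C ∧
      ∀ x ∈ C, M.Indep (C \ {x}) := by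
  obtain ⟨I, hI⟩ := M.exists_isBasis A hA
  obtain ⟨J, hJ, hIJ⟩ := hI.indep.subset_isBasis_of_subset (hI.subset.trans Set.subset_union_left)
    (Set.union_subset hA hB)
  have hJA : I = J ∩ A := hI.eq_of_subset_indep (hJ.indep.subset Set.inter_subset_left)
    (Set.subset_inter hIJ hI.subset) Set.inter_subset_right
  have hJdB : J \ A ⊆ B := fun x hx => (hJ.subset hx.1).resolve_left hx.2
  have hsplit : J.ncard = I.ncard + (J \ A).ncard := by
    rw [hJA, Set.ncard_inter_add_ncard_diff_eq_ncard J A (Set.toFinite _)]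
  have hJAlt : (J \ A).ncard < mrank M B := by
    have h1 := hJ.mrank_eq
    have h2 := hI.mrank_eq
    omega
  obtain ⟨K, hK, hJK⟩ := (hJ.indep.subset Set.diff_subset).subset_isBasis_of_subset hJdB hB
  have hss : J \ A ⊂ K := hJK.ssubset_of_ne (fun h => by rw [hK.mrank_eq, ← h] at hJAlt; omega)
  obtain ⟨b, hbK, hbJA⟩ := Set.exists_of_ssubset hss
  have hbB : b ∈ B := hK.subset hbK
  have hbA : b ∉ A := fun h => (Set.disjoint_left.mp hdisj h) hbB
  have hbJ : b ∉ J := fun h => hbJA ⟨h, hbA⟩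
  have hdep : ¬ M.Indep (insert b J) := fun h =>
    hbJ (hJ.mem_of_insert_indep (Set.subset_union_right hbB) h)
  -- minimal dependent subset
  set P : Set (Set α) := {D | D ⊆ insert b J ∧ ¬ M.Indep D} with hP
  obtain ⟨C, hCP, hCmin⟩ := Set.Finite.exists_minimalFor id P (Set.toFinite P)
    ⟨insert b J, Set.Subset.rfl, hdep⟩
  simp only [id] at hCmin
  have hCminsub : ∀ D, D ⊆ insert b J → ¬ M.Indep D → D ⊆ C → D = C :=
    fun D h1 h2 h3 => subset_antisymm h3 (hCmin ⟨h1, h2⟩ h3)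
  have hmin : ∀ x ∈ C, M.Indep (C \ {x}) := by
    intro x hx
    by_contra hnind
    have h4 := hCminsub (C \ {x}) (Set.diff_subset.trans hCP.1) hnind Set.diff_subset
    rw [← h4] at hx
    exact hx.2 rfl
  have hbC : b ∈ C := by
    by_contra hbC
    exact hCP.2 (hJ.indep.subset (fun x hx => (hCP.1 hx).resolve_left
      (fun h => hbC (h ▸ hx))))
  refine ⟨C, hCP.1.trans (Set.insert_subset (Set.mem_union_right _ hbB) hJ.subset), ?_,
    ⟨b, hbC, hbB⟩, hCP.2, hmin⟩
  by_contra hCA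
  rw [Set.not_nonempty_iff_eq_empty] at hCA
  refine hCP.2 (hK.indep.subset fun x hx => ?_)
  rcases hCP.1 hx with rfl | hxJ
  · exact hbK
  · refine hJK ⟨hxJ, fun hxA => ?_⟩
    exact Set.eq_empty_iff_forall_notMem.mp hCA x ⟨hx, hxA⟩

lemma mconnected_restrict_closure (hM : MLoopless M) (hC : C ⊆ M.E) (hCne : C.Nonempty)
    (hdep : ¬ M.Indep C) (hmin : ∀ x ∈ C, M.Indep (C \ {x})) :
    MConnected (M ↾ (M.closure C)) := by
  intro A B hAB hdisj hAne hBne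
  have hKE : M.closure C ⊆ M.E := M.closure_subset_ground C
  have hgr : (M ↾ (M.closure C)).E = M.closure C := rfl
  rw [hgr] at hAB
  have hA : A ⊆ M.closure C := hAB ▸ Set.subset_union_left
  have hB : B ⊆ M.closure C := hAB ▸ Set.subset_union_right
  rw [hgr, mrank_restrict hA, mrank_restrict hB, mrank_restrict Set.Subset.rfl]
  -- rank of closure C
  obtain ⟨x₀, hx₀⟩ := hCne
  have hCcl : M.IsBasis (C \ {x₀}) C := by
    refine (hmin x₀ hx₀).isBasis_of_subset_of_subset_closure Set.diff_subset fun y hy => ?_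
    rcases eq_or_ne y x₀ with rfl | hne
    · rw [(hmin y hy).mem_closure_iff_of_notMem (fun h => h.2 rfl),
        Set.insert_diff_singleton, Set.insert_eq_self.mpr hy]
      exact ⟨hdep, hC⟩
    · exact M.mem_closure_of_mem ⟨hy, hne⟩ (Set.diff_subset.trans hC)
  have hrk : mrank M (M.closure C) = (C \ {x₀}).ncard := hCcl.isBasis_closure_right.mrank_eq
  have hcard : (C \ {x₀}).ncard = C.ncard - 1 := Set.ncard_diff_singleton_of_mem hx₀
  have hCne1 : 0 < C.ncard := (Set.ncard_pos (Set.toFinite _)).mpr ⟨x₀, hx₀⟩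
  have hCsub : C ⊆ A ∪ B := hAB ▸ M.subset_closure C hC
  intro heq
  rcases Set.eq_empty_or_nonempty (C ∩ A) with hCA | hCA
  · have h1 : C ⊆ B := fun x hx => (hCsub hx).resolve_left
      (fun h => Set.eq_empty_iff_forall_notMem.mp hCA x ⟨hx, h⟩)
    have h2 : (C \ {x₀}).ncard ≤ mrank M B := le_mrank (hmin x₀ hx₀) (Set.diff_subset.trans h1)
    have h3 : 1 ≤ mrank M A := one_le_mrank hM (hA.trans hKE) hAne
    omega
  rcases Set.eq_empty_or_nonempty (C ∩ B) with hCB | hCB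
  · have h1 : C ⊆ A := fun x hx => (hCsub hx).resolve_right
      (fun h => Set.eq_empty_iff_forall_notMem.mp hCB x ⟨hx, h⟩)
    have h2 : (C \ {x₀}).ncard ≤ mrank M A := le_mrank (hmin x₀ hx₀) (Set.diff_subset.trans h1)
    have h3 : 1 ≤ mrank M B := one_le_mrank hM (hB.trans hKE) hBne
    omega
  obtain ⟨b', hb'⟩ := hCB
  have hCAind : M.Indep (C ∩ A) := (hmin b' hb'.1).subset
    (fun x hx => ⟨hx.1, fun h => (Set.disjoint_left.mp hdisj hx.2) (h ▸ hb'.2)⟩)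
  obtain ⟨a', ha'⟩ := hCA
  have hCBind : M.Indep (C ∩ B) := (hmin a' ha'.1).subset
    (fun x hx => ⟨hx.1, fun h => (Set.disjoint_left.mp hdisj (h ▸ ha'.2)) hx.2⟩)
  have h1 : (C ∩ A).ncard ≤ mrank M A := le_mrank hCAind Set.inter_subset_right
  have h2 : (C ∩ B).ncard ≤ mrank M B := le_mrank hCBind Set.inter_subset_right
  have hCBeq : C ∩ B = C \ A := by
    ext x
    constructor
    · exact fun hx => ⟨hx.1, fun h => (Set.disjoint_left.mp hdisj h) hx.2⟩
    · exact fun hx => ⟨hx.1, (hCsub hx.1).resolve_left hx.2⟩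
  have h3 : (C ∩ A).ncard + (C ∩ B).ncard = C.ncard := by
    rw [hCBeq, Set.ncard_inter_add_ncard_diff_eq_ncard C A (Set.toFinite _)]
  omega

lemma mconnected_restrict_closure_singleton (hM : MLoopless M) {e : α} (he : e ∈ M.E) :
    MConnected (M ↾ (M.closure {e})) := by
  intro A B hAB hdisj hAne hBne
  have hKE : M.closure {e} ⊆ M.E := M.closure_subset_ground _
  have hgr : (M ↾ (M.closure {e})).E = M.closure {e} := rfl
  rw [hgr] at hAB
  have hA : A ⊆ M.closure {e} := hAB ▸ Set.subset_union_left
  have hB : B ⊆ M.closure {e} := hAB ▸ Set.subset_union_right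
  rw [hgr, mrank_restrict hA, mrank_restrict hB, mrank_restrict Set.Subset.rfl]
  have hrk : mrank M (M.closure {e}) = 1 := by
    rw [(hM e he).isBasis_closure.mrank_eq, Set.ncard_singleton]
  have h1 : 1 ≤ mrank M A := one_le_mrank hM (hA.trans hKE) hAne
  have h2 : 1 ≤ mrank M B := one_le_mrank hM (hB.trans hKE) hBne
  omega


lemma closure_flat' (M : Matroid α) (X : Set α) : M.IsFlat (M.closure X) := by
  simp

lemma closure_circuit_mem_B (hM : MLoopless M) (hB : IsBuildingSet M B) {C : Set α}
    (hC : C ⊆ M.E) (hCne : C.Nonempty) (hdep : ¬ M.Indep C)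
    (hmin : ∀ x ∈ C, M.Indep (C \ {x})) : M.closure C ∈ B :=
  hB.2.1 _ (closure_flat' M C) (hCne.mono (M.subset_closure C hC))
    (mconnected_restrict_closure hM hC hCne hdep hmin)

lemma closure_singleton_mem_B (hM : MLoopless M) (hB : IsBuildingSet M B) {e : α}
    (he : e ∈ M.E) : M.closure {e} ∈ B :=
  hB.2.1 _ (closure_flat' M _) ⟨e, M.mem_closure_self e he⟩
    (mconnected_restrict_closure_singleton hM he)

/-- The factors of a flat `Z`: maximal elements of `B` below `Z`. -/
def Fac (M : Matroid α) (B : Set (Set α)) (Z : Set α) : Set (Set α) :=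
  {F | F ∈ B ∧ F ⊆ Z ∧ ∀ F' ∈ B, F' ⊆ Z → F ⊆ F' → F = F'}

lemma exists_fac_superset {Z X : Set α} (hX : X ∈ B) (hXZ : X ⊆ Z) :
    ∃ F ∈ Fac M B Z, X ⊆ F := by
  obtain ⟨F, hF, hFmax⟩ := Set.Finite.exists_maximalFor id {F | F ∈ B ∧ X ⊆ F ∧ F ⊆ Z}
    (Set.toFinite _) ⟨X, hX, Set.Subset.rfl, hXZ⟩
  exact ⟨F, ⟨hF.1, hF.2.2,
    fun F' hF' hF'Z hFF' => subset_antisymm hFF' (hFmax ⟨hF', hF.2.1.trans hFF', hF'Z⟩ hFF')⟩, hF.2.1⟩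

lemma fac_disjoint (hB : IsBuildingSet M B) {Z : Set α} (hZ : M.IsFlat Z) {F₁ F₂ : Set α}
    (h1 : F₁ ∈ Fac M B Z) (h2 : F₂ ∈ Fac M B Z) (hne : F₁ ≠ F₂) : Disjoint F₁ F₂ := by
  by_contra hdisj
  obtain ⟨x, hx1, hx2⟩ := Set.not_disjoint_iff.mp hdisj
  have hV : M.closure (F₁ ∪ F₂) ∈ B := hB.2.2 F₁ h1.1 F₂ h2.1 ⟨x, hx1, hx2⟩
  have hVZ : M.closure (F₁ ∪ F₂) ⊆ Z := by
    rw [← hZ.closure]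
    exact M.closure_subset_closure (Set.union_subset h1.2.1 h2.2.1)
  have hsub : F₁ ∪ F₂ ⊆ M.E := Set.union_subset (hB.1 F₁ h1.1).1.subset_ground
    (hB.1 F₂ h2.1).1.subset_ground
  have e1 : F₁ = M.closure (F₁ ∪ F₂) := h1.2.2 _ hV hVZ
    (Set.subset_union_left.trans (M.subset_closure _ hsub))
  have e2 : F₂ = M.closure (F₁ ∪ F₂) := h2.2.2 _ hV hVZ
    (Set.subset_union_right.trans (M.subset_closure _ hsub))
  exact hne (e1.trans e2.symm)

lemma sUnion_fac (hM : MLoopless M) (hB : IsBuildingSet M B) {Z : Set α} (hZ : M.IsFlat Z) :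
    ⋃₀ Fac M B Z = Z := by
  apply subset_antisymm
  · exact Set.sUnion_subset fun F hF => hF.2.1
  · intro z hz
    have hzE : z ∈ M.E := hZ.subset_ground hz
    have h1 : M.closure {z} ∈ B := closure_singleton_mem_B hM hB hzE
    have h2 : M.closure {z} ⊆ Z := by
      rw [← hZ.closure]
      exact M.closure_subset_closure (Set.singleton_subset_iff.mpr hz)
    obtain ⟨F, hF, hzF⟩ := exists_fac_superset h1 h2
    exact ⟨F, hF, hzF (M.mem_closure_self z hzE)⟩

lemma mrank_empty (M : Matroid α) : mrank M (∅ : Set α) = 0 := by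
  refine Nat.le_zero.mp (mrank_le fun I hI _ => ?_)
  rw [Set.subset_empty_iff.mp hI, Set.ncard_empty]

lemma mrank_sUnion_le (G : Finset (Set α)) : mrank M (⋃₀ ↑G) ≤ ∑ F ∈ G, mrank M F := by
  classical
  induction G using Finset.induction_on with
  | empty => simp [mrank_empty]
  | insert F G hFG ih =>
    rw [Finset.coe_insert, Set.sUnion_insert, Finset.sum_insert hFG]
    exact mrank_union_le.trans (Nat.add_le_add_left ih _)

lemma mrank_sUnion_fac (hM : MLoopless M) (hB : IsBuildingSet M B) {Z : Set α}
    (hZ : M.IsFlat Z) (G : Finset (Set α)) (hG : ↑G ⊆ Fac M B Z) :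
    mrank M (⋃₀ ↑G) = ∑ F ∈ G, mrank M F := by
  classical
  induction G using Finset.induction_on with
  | empty => simp [mrank_empty]
  | insert F G hFG ih =>
    have hFfac : F ∈ Fac M B Z := hG (by simp)
    have hGfac : ↑G ⊆ Fac M B Z := fun F' hF' => hG (by simp [hF'])
    rw [Finset.coe_insert, Set.sUnion_insert, Finset.sum_insert hFG, ← ih hGfac]
    set U : Set α := ⋃₀ ↑G with hU
    have hFE : F ⊆ M.E := (hB.1 F hFfac.1).1.subset_ground
    have hUZ : U ⊆ Z := Set.sUnion_subset fun F' hF' => (hGfac hF').2.1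
    have hUE : U ⊆ M.E := hUZ.trans hZ.subset_ground
    have hdisj : Disjoint F U := by
      rw [hU, Set.disjoint_sUnion_right]
      intro F' hF'
      exact fac_disjoint hB hZ hFfac (hGfac hF') (fun h => hFG (by rw [h]; exact Finset.mem_coe.mp hF'))
    refine le_antisymm mrank_union_le ?_
    by_contra hlt
    push_neg at hlt
    obtain ⟨C, hCsub, hCF, hCU, hCdep, hCmin⟩ :=
      exists_circuit_of_lt hFE hUE hdisj hlt
    have hCE : C ⊆ M.E := hCsub.trans (Set.union_subset hFE hUE)
    have hCne : C.Nonempty := hCF.mono Set.inter_subset_left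
    have hclC : M.closure C ∈ B := closure_circuit_mem_B hM hB hCE hCne hCdep hCmin
    obtain ⟨x, hxC, hxF⟩ := hCF
    have hV : M.closure (F ∪ M.closure C) ∈ B := hB.2.2 F hFfac.1 _ hclC
      ⟨x, hxF, M.subset_closure C hCE hxC⟩
    have hVZ : M.closure (F ∪ M.closure C) ⊆ Z := by
      rw [← hZ.closure]
      refine M.closure_subset_closure (Set.union_subset hFfac.2.1 ?_)
      rw [← hZ.closure]
      exact M.closure_subset_closure (hCsub.trans (Set.union_subset hFfac.2.1 hUZ))
    have hFV : F = M.closure (F ∪ M.closure C) := hFfac.2.2 _ hV hVZ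
      (Set.subset_union_left.trans (M.subset_closure _
        (Set.union_subset hFE (M.closure_subset_ground C))))
    obtain ⟨y, hyC, hyU⟩ := hCU
    have hyF : y ∈ F := by
      rw [hFV]
      exact M.subset_closure _ (Set.union_subset hFE (M.closure_subset_ground C))
        (Set.mem_union_right _ (M.subset_closure C hCE hyC))
    exact (Set.disjoint_left.mp hdisj hyF) hyU

lemma mrank_eq_sum_fac (hM : MLoopless M) (hB : IsBuildingSet M B) {Z : Set α}
    (hZ : M.IsFlat Z) :
    mrank M Z = ∑ F ∈ (Set.toFinite (Fac M B Z)).toFinset, mrank M F := by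
  rw [← mrank_sUnion_fac hM hB hZ _ (by simp [Set.Finite.coe_toFinset])]
  rw [Set.Finite.coe_toFinset, sUnion_fac hM hB hZ]

lemma maxB_eq_fac_ground (hB : IsBuildingSet M B) : maxB B = Fac M B M.E := by
  ext X
  constructor
  · exact fun hX => ⟨hX.1, (hB.1 X hX.1).1.subset_ground,
      fun F' hF' _ hXF' => hX.2 F' hF' hXF'⟩
  · exact fun hX => ⟨hX.1, fun Y hY hXY => hX.2.2 Y hY (hB.1 Y hY).1.subset_ground hXY⟩

lemma nested_chain (hB : IsBuildingSet M B) {N : Set (Set α)} (hN : IsNested M B N)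
    {X₁ X₂ : Set α} (h1 : X₁ ∈ N) (h2 : X₂ ∈ N) (hint : (X₁ ∩ X₂).Nonempty) :
    X₁ ⊆ X₂ ∨ X₂ ⊆ X₁ := by
  by_contra h
  push_neg at h
  have hne : X₁ ≠ X₂ := fun he => h.1 (he ▸ Set.Subset.rfl)
  have hpair : ({X₁, X₂} : Set (Set α)).Pairwise Incomp := by
    intro x hx y hy hxy
    rcases hx with rfl | hx <;> rcases hy with rfl | hy
    · exact absurd rfl hxy
    · rw [Set.mem_singleton_iff] at hy; subst hy; exact ⟨h.1, h.2⟩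
    · rw [Set.mem_singleton_iff] at hx; subst hx; exact ⟨h.2, h.1⟩
    · rw [Set.mem_singleton_iff] at hx hy; subst hx; subst hy; exact absurd rfl hxy
  have hnotin := hN.2.2 {X₁, X₂} (fun x hx => by
    rcases hx with rfl | hx
    · exact h1
    · rw [Set.mem_singleton_iff] at hx; subst hx; exact h2)
    (Set.nontrivial_pair hne) hpair
  rw [Set.sUnion_pair] at hnotin
  exact hnotin (hB.2.2 X₁ (hN.1 h1) X₂ (hN.1 h2) hint)

lemma mrank_biUnion_le {β : Type*} (G : Finset β) (g : β → Set α) :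
    mrank M (⋃ x ∈ G, g x) ≤ ∑ x ∈ G, mrank M (g x) := by
  classical
  induction G using Finset.induction_on with
  | empty => simp [mrank_empty]
  | insert b G hFG ih =>
    rw [Finset.set_biUnion_insert, Finset.sum_insert hFG]
    exact mrank_union_le.trans (Nat.add_le_add_left ih _)

lemma fac_closure_sUnion_nested (hM : MLoopless M) (hB : IsBuildingSet M B)
    {N : Set (Set α)} (hN : IsNested M B N) {S : Set (Set α)}
    (hS : S ⊆ N) (hpair : S.Pairwise Incomp) :
    Fac M B (M.closure (⋃₀ S)) = S := by
  classical
  set Z : Set α := M.closure (⋃₀ S) with hZdef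
  have hYB : ∀ Y ∈ S, Y ∈ B := fun Y hY => hN.1 (hS hY)
  have hSE : ⋃₀ S ⊆ M.E := Set.sUnion_subset fun Y hY => (hB.1 Y (hYB Y hY)).1.subset_ground
  have hZflat : M.IsFlat Z := closure_flat' M _
  have hYZ : ∀ Y ∈ S, Y ⊆ Z := fun Y hY =>
    (Set.subset_sUnion_of_mem hY).trans (M.subset_closure _ hSE)
  set g : Set α → Set α := fun F => M.closure (⋃₀ {Y ∈ S | Y ⊆ F}) with hgdef
  have hgsub : ∀ F ∈ Fac M B Z, g F ⊆ F := by
    intro F hF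
    have h1 : ⋃₀ {Y ∈ S | Y ⊆ F} ⊆ F := Set.sUnion_subset fun Y hY => hY.2
    calc g F ⊆ M.closure F := M.closure_subset_closure h1
    _ = F := (hB.1 F hF.1).1.closure
  set FacF : Finset (Set α) := (Set.toFinite (Fac M B Z)).toFinset with hFacF
  have hmemFacF : ∀ F, F ∈ FacF ↔ F ∈ Fac M B Z := fun F => Set.Finite.mem_toFinset _
  -- every Y in S is inside g F for the factor F containing it
  have hcover : ⋃₀ S ⊆ ⋃ F ∈ FacF, g F := by
    intro x hx
    obtain ⟨Y, hYS, hxY⟩ := hx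
    obtain ⟨F, hF, hYF⟩ := exists_fac_superset (hYB Y hYS) (hYZ Y hYS)
    refine Set.mem_biUnion ((hmemFacF F).mpr hF) ?_
    have : Y ⊆ g F := (Set.subset_sUnion_of_mem (show Y ∈ {Y' ∈ S | Y' ⊆ F} from ⟨hYS, hYF⟩)).trans
      (M.subset_closure _ (Set.sUnion_subset fun Y' hY' => (hB.1 Y' (hYB Y' hY'.1)).1.subset_ground))
    exact this hxY
  have hrkZ : mrank M Z = ∑ F ∈ FacF, mrank M F := mrank_eq_sum_fac hM hB hZflat
  have hgle : ∀ F ∈ FacF, mrank M (g F) ≤ mrank M F :=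
    fun F hF => mrank_mono (hgsub F ((hmemFacF F).mp hF))
  have hsum : ∑ F ∈ FacF, mrank M F ≤ ∑ F ∈ FacF, mrank M (g F) := by
    calc ∑ F ∈ FacF, mrank M F = mrank M Z := hrkZ.symm
    _ = mrank M (⋃₀ S) := by rw [hZdef]; exact mrank_closure_eq hSE
    _ ≤ mrank M (⋃ F ∈ FacF, g F) := mrank_mono hcover
    _ ≤ ∑ F ∈ FacF, mrank M (g F) := mrank_biUnion_le _ _
  have hpt : ∀ F ∈ FacF, mrank M (g F) = mrank M F :=
    (Finset.sum_eq_sum_iff_of_le hgle).mp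
      (le_antisymm (Finset.sum_le_sum hgle) hsum)
  -- key: each factor is an element of S
  have hkey : ∀ F ∈ Fac M B Z, ∃ Y ∈ S, {Y' ∈ S | Y' ⊆ F} = {Y} ∧ F = Y := by
    intro F hF
    have hFflat : M.IsFlat F := (hB.1 F hF.1).1
    have hgF : g F = F := mrank_flat_eq_of_subset (closure_flat' M _) hFflat
      (hgsub F hF) (le_of_eq (hpt F ((hmemFacF F).mpr hF)).symm)
    have hSF_ne : {Y' ∈ S | Y' ⊆ F}.Nonempty := by
      rcases Set.eq_empty_or_nonempty {Y' ∈ S | Y' ⊆ F} with he | hne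
      · exfalso
        have : g F = ∅ := by
          rw [hgdef]; simp only [he, Set.sUnion_empty]; exact closure_empty_eq hM
        have h1 : 1 ≤ mrank M F := one_le_mrank hM hFflat.subset_ground (hB.1 F hF.1).2
        rw [← hgF, this, mrank_empty] at h1
        omega
      · exact hne
    have hSF_sub : {Y' ∈ S | Y' ⊆ F}.Subsingleton := by
      by_contra hnsub
      rw [Set.not_subsingleton_iff] at hnsub
      have := hN.2.2 {Y' ∈ S | Y' ⊆ F} (fun Y' hY' => hS hY'.1) hnsub
        (hpair.mono (Set.sep_subset _ _))
      rw [show M.closure (⋃₀ {Y' ∈ S | Y' ⊆ F}) = g F from rfl, hgF] at this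
      exact this hF.1
    obtain ⟨Y, hY⟩ := hSF_ne
    have hSFeq : {Y' ∈ S | Y' ⊆ F} = {Y} := hSF_sub.eq_singleton_of_mem hY
    refine ⟨Y, hY.1, hSFeq, ?_⟩
    rw [← hgF, hgdef]
    simp only [hSFeq, Set.sUnion_singleton]
    exact (hB.1 Y (hYB Y hY.1)).1.closure
  ext W
  constructor
  · intro hW
    obtain ⟨Y, hYS, -, rfl⟩ := hkey W hW
    exact hYS
  · intro hW
    obtain ⟨F, hF, hWF⟩ := exists_fac_superset (hYB W hW) (hYZ W hW)
    obtain ⟨Y, hYS, hSFeq, hFY⟩ := hkey F hF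
    have : W ∈ ({Y} : Set (Set α)) := hSFeq ▸ (⟨hW, hWF⟩ : W ∈ {Y' ∈ S | Y' ⊆ F})
    rw [Set.mem_singleton_iff] at this
    subst this
    exact hFY ▸ hF

lemma mrank_closure_sUnion_nested (hM : MLoopless M) (hB : IsBuildingSet M B)
    {N : Set (Set α)} (hN : IsNested M B N) {S : Set (Set α)}
    (hS : S ⊆ N) (hpair : S.Pairwise Incomp) :
    mrank M (M.closure (⋃₀ S)) = ∑ Y ∈ (Set.toFinite S).toFinset, mrank M Y := by
  have h1 := mrank_eq_sum_fac hM hB (closure_flat' M (⋃₀ S)) (B := B)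
  rw [h1]
  apply Finset.sum_congr _ (fun _ _ => rfl)
  ext W
  simp only [Set.Finite.mem_toFinset]
  rw [fac_closure_sUnion_nested hM hB hN hS hpair]

/-- The children of `X` in `N`: maximal elements of `N` strictly below `X`. -/
def children (N : Set (Set α)) (X : Set α) : Set (Set α) :=
  {Y ∈ N | Y ⊂ X ∧ ∀ Y' ∈ N, Y' ⊂ X → Y ⊆ Y' → Y = Y'}

lemma children_pairwise {N : Set (Set α)} {X : Set α} :
    (children N X).Pairwise Incomp := by
  intro Y₁ h1 Y₂ h2 hne
  constructor
  · exact fun hsub => hne (h1.2.2 Y₂ h2.1 h2.2.1 hsub)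
  · exact fun hsub => hne.symm (h2.2.2 Y₁ h1.1 h1.2.1 hsub)

lemma subset_child {N : Set (Set α)} {X Y : Set α} (hY : Y ∈ N) (hYX : Y ⊂ X) :
    ∃ Y' ∈ children N X, Y ⊆ Y' := by
  obtain ⟨Y', hY', hmax⟩ := Set.Finite.exists_maximalFor id {Y' ∈ N | Y ⊆ Y' ∧ Y' ⊂ X}
    (Set.toFinite _) ⟨Y, hY, Set.Subset.rfl, hYX⟩
  exact ⟨Y', ⟨hY'.1, hY'.2.2, fun Y'' hY'' hY''X hsub =>
    subset_antisymm hsub (hmax ⟨hY'', hY'.2.1.trans hsub, hY''X⟩ hsub)⟩, hY'.2.1⟩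

lemma mrank_singleton_le (M : Matroid α) (e : α) : mrank M {e} ≤ 1 := by
  refine mrank_le fun I hI _ => ?_
  calc I.ncard ≤ ({e} : Set α).ncard := Set.ncard_le_ncard hI (Set.toFinite _)
  _ = 1 := Set.ncard_singleton e

theorem key_lemma (hM : MLoopless M) (hB : IsBuildingSet M B) {N : Set (Set α)}
    (hNmax : IsMaxNested M B N) {X : Set α} (hX : X ∈ N) :
    mrank M X = ∑ Y ∈ (Set.toFinite (children N X)).toFinset, mrank M Y + 1 := by
  classical
  obtain ⟨hN, hmax⟩ := hNmax
  set D : Set (Set α) := children N X with hDdef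
  have hDsub : D ⊆ N := fun Y hY => hY.1
  have hDB : ∀ Y ∈ D, Y ∈ B := fun Y hY => hN.1 (hDsub hY)
  have hXB : X ∈ B := hN.1 hX
  have hXflat : M.IsFlat X := (hB.1 X hXB).1
  have hXne : X.Nonempty := (hB.1 X hXB).2
  set Z₀ : Set α := M.closure (⋃₀ D) with hZ₀def
  have hUE : ⋃₀ D ⊆ M.E := Set.sUnion_subset fun Y hY => (hB.1 Y (hDB Y hY)).1.subset_ground
  have hrkZ₀ : mrank M Z₀ = ∑ Y ∈ (Set.toFinite D).toFinset, mrank M Y :=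
    mrank_closure_sUnion_nested hM hB hN hDsub children_pairwise
  have hZ₀flat : M.IsFlat Z₀ := closure_flat' M _
  have hZ₀X : Z₀ ⊆ X := by
    rw [hZ₀def, ← hXflat.closure]
    exact M.closure_subset_closure (Set.sUnion_subset fun Y hY => hY.2.1.subset)
  have hZ₀ne : Z₀ ≠ X := by
    rcases Set.eq_empty_or_nonempty D with hDe | hDne
    · rw [hZ₀def, hDe]
      simp only [Set.sUnion_empty]
      rw [closure_empty_eq hM]
      exact fun h => hXne.ne_empty h.symm
    rcases Set.subsingleton_or_nontrivial D with hsub | hntv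
    · obtain ⟨Y, hY⟩ := hDne
      have hDY : D = {Y} := hsub.eq_singleton_of_mem hY
      rw [hZ₀def, hDY, Set.sUnion_singleton, (hB.1 Y (hDB Y hY)).1.closure]
      exact hY.2.1.ne
    · intro h
      have hv : M.closure (⋃₀ D) ∈ B := by rw [← hZ₀def, h]; exact hXB
      exact hN.2.2 D hDsub hntv children_pairwise hv
  have hrklt : mrank M Z₀ < mrank M X :=
    mrank_lt_of_flat_ssubset hZ₀flat hXflat (HasSubset.Subset.ssubset_of_ne hZ₀X hZ₀ne)
  refine le_antisymm ?_ (by omega)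
  -- upper bound: rk X ≤ rk Z₀ + 1
  rw [← hrkZ₀]
  by_contra hgt
  push_neg at hgt
  have hgt' : mrank M Z₀ + 1 < mrank M X := hgt
  obtain ⟨e, heX, heZ₀⟩ := Set.exists_of_ssubset (HasSubset.Subset.ssubset_of_ne hZ₀X hZ₀ne)
  set Z₁ : Set α := M.closure (Z₀ ∪ {e}) with hZ₁def
  have hZ₁flat : M.IsFlat Z₁ := closure_flat' M _
  have hZ₁X : Z₁ ⊆ X := by
    rw [hZ₁def, ← hXflat.closure]
    exact M.closure_subset_closure (Set.union_subset hZ₀X (Set.singleton_subset_iff.mpr heX))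
  have hZ₁E : Z₀ ∪ {e} ⊆ M.E := (Set.union_subset hZ₀X
    (Set.singleton_subset_iff.mpr heX)).trans hXflat.subset_ground
  have hrkZ₁ : mrank M Z₁ < mrank M X := by
    have h1 : mrank M Z₁ = mrank M (Z₀ ∪ {e}) := mrank_closure_eq hZ₁E
    have h2 : mrank M (Z₀ ∪ {e}) ≤ mrank M Z₀ + mrank M {e} := mrank_union_le
    have h3 := mrank_singleton_le M e
    omega
  have hZ₁neX : Z₁ ≠ X := fun h => by rw [h] at hrkZ₁; omega
  have heZ₁ : e ∈ Z₁ := M.subset_closure _ hZ₁E (Set.mem_union_right _ rfl)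
  -- the factor of Z₁ containing e
  have heZ₁' : e ∈ ⋃₀ Fac M B Z₁ := by rwa [sUnion_fac hM hB hZ₁flat]
  obtain ⟨W, hWfac, heW⟩ := heZ₁'
  have hWB : W ∈ B := hWfac.1
  have hWZ₁ : W ⊆ Z₁ := hWfac.2.1
  have hWX : W ⊆ X := hWZ₁.trans hZ₁X
  have hWneX : W ≠ X := by
    intro h
    rw [← h] at hZ₁X
    exact hZ₁neX (subset_antisymm hWZ₁ hZ₁X ▸ h)
  have hWnotN : W ∉ N := by
    intro hWN
    obtain ⟨Y, hY, hWY⟩ := subset_child hWN (HasSubset.Subset.ssubset_of_ne hWX hWneX)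
    have : e ∈ Z₀ := M.subset_closure _ hUE (Set.mem_sUnion.mpr ⟨Y, hY, hWY heW⟩)
    exact heZ₀ this
  -- show insert W N is nested, contradicting maximality
  have hnested : IsNested M B (insert W N) := by
    refine ⟨Set.insert_subset hWB hN.1, hN.2.1.trans (Set.subset_insert W N), ?_⟩
    intro S hS hntv hpair hSB
    by_cases hWS : W ∈ S
    · set S' : Set (Set α) := S \ {W} with hS'def
      have hS'N : S' ⊆ N := fun Y hY => ((hS hY.1).resolve_left (fun h => hY.2 h))
      have hS'ne : S'.Nonempty := by
        obtain ⟨a, ha, b, hb, hab⟩ := hntv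
        rcases eq_or_ne a W with rfl | hA
        · exact ⟨b, hb, fun h => hab (Set.mem_singleton_iff.mp h).symm⟩
        · exact ⟨a, ha, fun h => hA (Set.mem_singleton_iff.mp h)⟩
      have hWinc : ∀ Y ∈ S', Incomp W Y := fun Y hY =>
        hpair hWS hY.1 (fun h => (h ▸ hWnotN) (hS'N hY))
      have hUS : ⋃₀ S = W ∪ ⋃₀ S' := by
        rw [hS'def]
        ext x
        constructor
        · rintro ⟨Y, hY, hx⟩
          rcases eq_or_ne Y W with rfl | hne
          · exact Set.mem_union_left _ hx
          · exact Set.mem_union_right _ ⟨Y, ⟨hY, hne⟩, hx⟩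
        · rintro (hx | ⟨Y, hY, hx⟩)
          · exact ⟨W, hWS, hx⟩
          · exact ⟨Y, hY.1, hx⟩
      have hSsubB : S ⊆ B := hS.trans (Set.insert_subset hWB hN.1)
      have hSE : ⋃₀ S ⊆ M.E := Set.sUnion_subset fun Y hY => (hB.1 Y (hSsubB hY)).1.subset_ground
      have hWV : W ⊆ M.closure (⋃₀ S) := (Set.subset_sUnion_of_mem hWS).trans
        (M.subset_closure _ hSE)
      set Sout : Set (Set α) := {Y ∈ S' | ¬ Y ⊆ X} with hSoutdef
      rcases Set.eq_empty_or_nonempty Sout with hOe | hOne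
      · -- all of S' is strictly inside X, so below Z₀
        have hS'Z₀ : ⋃₀ S' ⊆ Z₀ := by
          refine Set.sUnion_subset fun Y hY => ?_
          have hYX : Y ⊆ X := by
            by_contra hc
            exact Set.eq_empty_iff_forall_notMem.mp hOe Y ⟨hY, hc⟩
          have hYssX : Y ⊂ X := HasSubset.Subset.ssubset_of_ne hYX
            (fun h => (hWinc Y hY).1 (h ▸ hWX))
          obtain ⟨Y', hY', hYY'⟩ := subset_child (hS'N hY) hYssX
          exact hYY'.trans ((Set.subset_sUnion_of_mem hY').trans (M.subset_closure _ hUE))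
        have hZ₀Z₁ : Z₀ ⊆ Z₁ := Set.subset_union_left.trans (M.subset_closure _ hZ₁E)
        have hVZ₁ : M.closure (⋃₀ S) ⊆ Z₁ := by
          have h1 : ⋃₀ S ⊆ Z₁ := by
            rw [hUS]
            exact Set.union_subset hWZ₁ (hS'Z₀.trans hZ₀Z₁)
          calc M.closure (⋃₀ S) ⊆ M.closure Z₁ := M.closure_subset_closure h1
          _ = Z₁ := hZ₁flat.closure
        have hWeq : W = M.closure (⋃₀ S) := hWfac.2.2 _ hSB hVZ₁ hWV
        obtain ⟨Y, hY⟩ := hS'ne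
        refine (hWinc Y hY).2 ?_
        rw [hWeq]
        exact (Set.subset_sUnion_of_mem hY.1).trans (M.subset_closure _ hSE)
      · obtain ⟨Y₀, hY₀⟩ := hOne
        set T : Set (Set α) := insert X Sout with hTdef
        have hTN : T ⊆ N := Set.insert_subset hX (fun Y hY => hS'N hY.1)
        have hXnotOut : X ∉ Sout := fun h => h.2 Set.Subset.rfl
        have hTntv : T.Nontrivial := ⟨X, Set.mem_insert _ _, Y₀,
          Set.mem_insert_of_mem _ hY₀, fun h => hY₀.2 (by rw [← h])⟩
        have hTpair : T.Pairwise Incomp := by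
          intro a ha b hb hab
          rcases ha with rfl | ha <;> rcases hb with rfl | hb
          · exact absurd rfl hab
          · exact ⟨fun h => (hWinc b hb.1).1 (hWX.trans h), hb.2⟩
          · exact ⟨ha.2, fun h => (hWinc a ha.1).1 (hWX.trans h)⟩
          · exact hpair ha.1.1 hb.1.1 hab
        have hunion : (⋃₀ S) ∪ X = ⋃₀ T := by
          rw [hTdef, Set.sUnion_insert]
          apply subset_antisymm
          · apply Set.union_subset
            · intro x hx
              obtain ⟨Y, hYS, hxY⟩ := hx
              rcases eq_or_ne Y W with rfl | hne
              · exact Set.mem_union_left _ (hWX hxY)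
              · by_cases hYX : Y ⊆ X
                · exact Set.mem_union_left _ (hYX hxY)
                · exact Set.mem_union_right _ ⟨Y, ⟨⟨hYS, hne⟩, hYX⟩, hxY⟩
            · exact Set.subset_union_left
          · refine Set.union_subset Set.subset_union_right
              (Set.sUnion_subset fun Y hY => ?_)
            exact (Set.subset_sUnion_of_mem hY.1.1).trans Set.subset_union_left
        have hVX : M.closure ((⋃₀ S) ∪ X) ∈ B := by
          have hint : (M.closure (⋃₀ S) ∩ X).Nonempty := ⟨e, hWV heW, heX⟩
          have h2 := hB.2.2 _ hSB X hXB hint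
          rwa [M.closure_union_closure_left_eq] at h2
        rw [hunion] at hVX
        exact hN.2.2 T hTN hTntv hTpair hVX
    · exact hN.2.2 S (fun Y hY => (hS hY).resolve_left
        (fun h => hWS (h ▸ hY))) hntv hpair hSB
  have := hmax (insert W N) hnested (Set.subset_insert W N)
  exact hWnotN (this ▸ Set.mem_insert W N)

lemma exists_parent (hM : MLoopless M) (hB : IsBuildingSet M B) {N : Set (Set α)}
    (hN : IsNested M B N) {Y : Set α} (hY : Y ∈ N) (hYmax : Y ∉ maxB B) :
    ∃ X ∈ N, Y ∈ children N X := by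
  have hYB : Y ∈ B := hN.1 hY
  have hex : ∃ Y₂ ∈ B, Y ⊆ Y₂ ∧ Y ≠ Y₂ := by
    by_contra h
    push_neg at h
    exact hYmax ⟨hYB, fun Z hZ hYZ => (h Z hZ hYZ)⟩
  obtain ⟨Y₂, hY₂B, hYY₂, hYne₂⟩ := hex
  obtain ⟨F, hFfac, hY₂F⟩ := exists_fac_superset hY₂B (hB.1 Y₂ hY₂B).1.subset_ground
  have hFmaxB : F ∈ maxB B := by rw [maxB_eq_fac_ground hB]; exact hFfac
  have hFN : F ∈ N := hN.2.1 hFmaxB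
  have hYF : Y ⊂ F := by
    refine HasSubset.Subset.ssubset_of_ne (hYY₂.trans hY₂F) (fun h => ?_)
    exact hYne₂ (subset_antisymm hYY₂ (hY₂F.trans h.symm.subset))
  obtain ⟨X₀, hX₀, hmin⟩ := Set.Finite.exists_minimalFor id {X ∈ N | Y ⊂ X}
    (Set.toFinite _) ⟨F, hFN, hYF⟩
  refine ⟨X₀, hX₀.1, hY, hX₀.2, fun Y' hY'N hY'X₀ hYY' => ?_⟩
  by_contra hne
  have hYssY' : Y ⊂ Y' := HasSubset.Subset.ssubset_of_ne hYY' hne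
  have h5 := hmin ⟨hY'N, hYssY'⟩ hY'X₀.subset
  simp only [id] at h5
  exact hY'X₀.ne (subset_antisymm hY'X₀.subset h5)

lemma children_unique (hB : IsBuildingSet M B) {N : Set (Set α)} (hN : IsNested M B N)
    {X₁ X₂ Y : Set α} (hX₁ : X₁ ∈ N) (hX₂ : X₂ ∈ N)
    (h1 : Y ∈ children N X₁) (h2 : Y ∈ children N X₂) : X₁ = X₂ := by
  obtain ⟨y, hy⟩ := (hB.1 Y (hN.1 h1.1)).2
  have hint : (X₁ ∩ X₂).Nonempty := ⟨y, h1.2.1.subset hy, h2.2.1.subset hy⟩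
  rcases eq_or_ne X₁ X₂ with he | hne
  · exact he
  rcases nested_chain hB hN hX₁ hX₂ hint with h | h
  · have hss : X₁ ⊂ X₂ := HasSubset.Subset.ssubset_of_ne h hne
    exact absurd (h2.2.2 X₁ hX₁ hss h1.2.1.subset) h1.2.1.ne
  · have hss : X₂ ⊂ X₁ := HasSubset.Subset.ssubset_of_ne h hne.symm
    exact absurd (h1.2.2 X₂ hX₂ hss h2.2.1.subset) h2.2.1.ne

end Helpers

/-- every inclusion-maximal nested set has cardinality `rank M`. -/
theorem maxNested_card_eq_rank {α : Type*} [Fintype α] [LinearOrder α]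
    (M : Matroid α) (hM : MLoopless M)
    (B : Set (Set α)) (hB : IsBuildingSet M B)
    (N : Set (Set α)) (hN : IsMaxNested M B N) :
    N.ncard = mrank M M.E := by
  classical
  set Nf : Finset (Set α) := (Set.toFinite N).toFinset with hNf
  set maxF : Finset (Set α) := (Set.toFinite (maxB B)).toFinset with hmaxF
  set D : Set α → Finset (Set α) := fun X => (Set.toFinite (children N X)).toFinset with hD
  have hkey : ∀ X ∈ Nf, mrank M X = ∑ Y ∈ D X, mrank M Y + 1 :=
    fun X hX => key_lemma hM hB hN ((Set.Finite.mem_toFinset _).mp hX)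
  have hmaxsub : maxF ⊆ Nf := by
    intro X hX
    rw [hmaxF, Set.Finite.mem_toFinset] at hX
    rw [hNf, Set.Finite.mem_toFinset]
    exact hN.1.2.1 hX
  have hbiUnion : Nf.biUnion D = Nf \ maxF := by
    ext Y
    simp only [Finset.mem_biUnion, Finset.mem_sdiff, hNf, hmaxF, hD,
      Set.Finite.mem_toFinset]
    constructor
    · rintro ⟨X, hXN, hYD⟩
      refine ⟨hYD.1, fun hYmax => ?_⟩
      have := hYmax.2 X (hN.1.1 hXN) hYD.2.1.subset
      exact hYD.2.1.ne this
    · rintro ⟨hYN, hYmax⟩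
      obtain ⟨X, hXN, hYD⟩ := exists_parent hM hB hN.1 hYN hYmax
      exact ⟨X, hXN, hYD⟩
  have hdisj : (↑Nf : Set (Set α)).PairwiseDisjoint D := by
    intro X₁ h₁ X₂ h₂ hne
    rw [Finset.mem_coe, hNf, Set.Finite.mem_toFinset] at h₁ h₂
    rw [Function.onFun, Finset.disjoint_left]
    intro Y hY₁ hY₂
    rw [hD, Set.Finite.mem_toFinset] at hY₁ hY₂
    exact hne (children_unique hB hN.1 h₁ h₂ hY₁ hY₂)
  have h1 : ∑ X ∈ Nf, mrank M X = ∑ X ∈ Nf, (∑ Y ∈ D X, mrank M Y) + Nf.card := by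
    rw [Finset.sum_congr rfl hkey, Finset.sum_add_distrib, Finset.sum_const, smul_eq_mul,
      mul_one]
  have h2 : ∑ X ∈ Nf, ∑ Y ∈ D X, mrank M Y = ∑ Y ∈ Nf \ maxF, mrank M Y := by
    rw [← Finset.sum_biUnion hdisj, hbiUnion]
  have h3 : ∑ X ∈ Nf, mrank M X = ∑ Y ∈ Nf \ maxF, mrank M Y + ∑ Y ∈ maxF, mrank M Y :=
    (Finset.sum_sdiff hmaxsub).symm
  have h4 : ∑ Y ∈ maxF, mrank M Y = mrank M M.E := by
    rw [mrank_eq_sum_fac hM hB (M.ground_isFlat) (B := B)]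
    apply Finset.sum_congr _ (fun _ _ => rfl)
    ext W
    simp only [Set.Finite.mem_toFinset, hmaxF]
    rw [← maxB_eq_fac_ground hB]
  have h5 : N.ncard = Nf.card := by
    rw [hNf, Set.ncard_eq_toFinset_card N]
  omega
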